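/- Let c₀ > 0 and let ν be a probability density on [-1,1] with ν(λ) ≥ c₀ for all λ. Let x₁, x₂, … be any (deterministic) sequence in [-1,1], let S_t = Σ_{i=1}^{t} x_i, let K_t = ∫_{-1}^{1} ∏_{i=1}^{t} (1 + λ x_i) ν(λ) dλ, and for α ∈ (0,1) let τ = inf{ t ≥ 1 : K_t ≥ 1/α }. If liminf_{t→∞} |S_t / t| > 0, then liminf_{t→∞} (1/t) log K_t > 0, and consequently τ < ∞. -/

import Mathlib

open MeasureTheory Finset Filter

/-!
Since `log (1 + u) ≥ u - 2u²` for `u ≥ -1/2`, a constant bet `λ` with `|λ| ≤ 1/2` has wealth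
at least `exp (λ S_t - 2λ²t)`. When `|S_t| ≥ r t` and `δ ≤ r / 8`, every bet `λ` with the sign
of `S_t` and `δ/2 ≤ |λ| ≤ δ` earns at least `exp (δ r t / 4)`, and these bets carry `ν`-mass at
least `c₀ δ / 2`; so `K_t` grows exponentially, while `K_t ≤ 2^t` keeps `(1/t) log K_t` bounded.
-/
theorem Real.sub_two_mul_sq_le_log_one_add {u : ℝ} (hu : -1 / 2 ≤ u) :
    u - 2 * u ^ 2 ≤ Real.log (1 + u) := by
  have hpos : 0 < 1 + u := by linarith
  calc u - 2 * u ^ 2 ≤ u / (1 + u) := by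
        rw [le_div_iff₀ hpos]
        nlinarith [mul_nonneg (sq_nonneg u) (by linarith : 0 ≤ 1 + 2 * u)]
    _ = 1 - (1 + u)⁻¹ := by field_simp; ring
    _ ≤ Real.log (1 + u) := Real.one_sub_inv_le_log_of_pos hpos

theorem Real.exp_sub_two_mul_sq_le_one_add {u : ℝ} (hu : -1 / 2 ≤ u) :
    Real.exp (u - 2 * u ^ 2) ≤ 1 + u :=
  (Real.le_log_iff_exp_le (by linarith)).1 (Real.sub_two_mul_sq_le_log_one_add hu)

theorem one_add_mul_mem_Icc {l y : ℝ} (hl : |l| ≤ 1) (hy : |y| ≤ 1) :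
    1 + l * y ∈ Set.Icc (0 : ℝ) 2 := by
  have h := abs_le.1 ((abs_mul l y).trans_le (mul_le_one₀ hl (abs_nonneg y) hy))
  constructor <;> linarith [h.1, h.2]

section ConstantBet

variable {ι : Type*} (s : Finset ι) {x : ι → ℝ}

theorem exp_sub_le_prod_one_add_mul (hx : ∀ i ∈ s, |x i| ≤ 1) {l : ℝ} (hl : |l| ≤ 1 / 2) :
    Real.exp (l * ∑ i ∈ s, x i - 2 * l ^ 2 * #s) ≤ ∏ i ∈ s, (1 + l * x i) := by
  have hsum : l * ∑ i ∈ s, x i - 2 * l ^ 2 * #s = ∑ i ∈ s, (l * x i - 2 * l ^ 2) := by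
    simp only [Finset.sum_sub_distrib, Finset.mul_sum, Finset.sum_const, nsmul_eq_mul]
    ring
  rw [hsum, Real.exp_sum]
  refine Finset.prod_le_prod (fun i _ => (Real.exp_pos _).le) fun i hi => ?_
  have hlx : |l * x i| ≤ 1 / 2 := by
    rw [abs_mul]
    nlinarith [abs_nonneg l, abs_nonneg (x i), hx i hi]
  have hx2 : x i ^ 2 ≤ 1 := (sq_le_one_iff_abs_le_one _).2 (hx i hi)
  calc Real.exp (l * x i - 2 * l ^ 2) ≤ Real.exp (l * x i - 2 * (l * x i) ^ 2) :=
        Real.exp_le_exp.2 (by nlinarith [mul_le_mul_of_nonneg_left hx2 (sq_nonneg l)])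
    _ ≤ 1 + l * x i := Real.exp_sub_two_mul_sq_le_one_add (by linarith [neg_abs_le (l * x i)])

theorem prod_one_add_mul_nonneg (hx : ∀ i ∈ s, |x i| ≤ 1) {l : ℝ} (hl : |l| ≤ 1) :
    0 ≤ ∏ i ∈ s, (1 + l * x i) :=
  Finset.prod_nonneg fun i hi => (one_add_mul_mem_Icc hl (hx i hi)).1

theorem prod_one_add_mul_le_two_pow (hx : ∀ i ∈ s, |x i| ≤ 1) {l : ℝ} (hl : |l| ≤ 1) :
    ∏ i ∈ s, (1 + l * x i) ≤ 2 ^ #s := by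
  calc ∏ i ∈ s, (1 + l * x i) ≤ ∏ _i ∈ s, (2 : ℝ) :=
        Finset.prod_le_prod (fun i hi => (one_add_mul_mem_Icc hl (hx i hi)).1)
          fun i hi => (one_add_mul_mem_Icc hl (hx i hi)).2
    _ = 2 ^ #s := Finset.prod_const 2

end ConstantBet

theorem exists_Icc_subset_forall_half_mul_abs_le_mul (S : ℝ) {δ : ℝ} (hδ : 0 < δ) :
    ∃ a, Set.Icc a (a + δ / 2) ⊆ Set.Icc (-δ) δ ∧
      ∀ l ∈ Set.Icc a (a + δ / 2), δ / 2 * |S| ≤ l * S := by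
  rcases le_or_gt 0 S with hS | hS
  · refine ⟨δ / 2, fun l hl => ⟨by linarith [hl.1], by linarith [hl.2]⟩, fun l hl => ?_⟩
    rw [abs_of_nonneg hS]
    exact mul_le_mul_of_nonneg_right hl.1 hS
  · refine ⟨-δ, fun l hl => ⟨hl.1, by linarith [hl.2]⟩, fun l hl => ?_⟩
    rw [abs_of_neg hS]
    nlinarith [hl.2]

section Mixture

variable {ι : Type*} (s : Finset ι) {x : ι → ℝ} {ν : ℝ → ℝ}

theorem integrableOn_prod_one_add_mul_mul (hν : IntegrableOn ν (Set.Icc (-1) 1)) :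
    IntegrableOn (fun l => (∏ i ∈ s, (1 + l * x i)) * ν l) (Set.Icc (-1) 1) :=
  hν.continuousOn_mul (by fun_prop) isCompact_Icc

theorem setIntegral_prod_one_add_mul_mul_le (hx : ∀ i ∈ s, |x i| ≤ 1)
    (hν_nonneg : ∀ l ∈ Set.Icc (-1 : ℝ) 1, 0 ≤ ν l) (hν : IntegrableOn ν (Set.Icc (-1) 1)) :
    ∫ l in Set.Icc (-1 : ℝ) 1, (∏ i ∈ s, (1 + l * x i)) * ν l ≤
      2 ^ #s * ∫ l in Set.Icc (-1 : ℝ) 1, ν l := by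
  rw [← integral_const_mul]
  refine setIntegral_mono_on (integrableOn_prod_one_add_mul_mul s hν) (hν.const_mul _)
    measurableSet_Icc fun l hl => mul_le_mul_of_nonneg_right ?_ (hν_nonneg l hl)
  exact prod_one_add_mul_le_two_pow s hx (abs_le.2 hl)

theorem exp_le_setIntegral_prod_one_add_mul_mul (hx : ∀ i ∈ s, |x i| ≤ 1) {c₀ : ℝ}
    (hc₀ : 0 ≤ c₀) (hν_lb : ∀ l ∈ Set.Icc (-1 : ℝ) 1, c₀ ≤ ν l)
    (hν : IntegrableOn ν (Set.Icc (-1) 1)) {δ : ℝ} (hδ : 0 < δ) (hδ_le : δ ≤ 1 / 2) :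
    c₀ * (δ / 2) * Real.exp (δ / 2 * |∑ i ∈ s, x i| - 2 * δ ^ 2 * #s) ≤
      ∫ l in Set.Icc (-1 : ℝ) 1, (∏ i ∈ s, (1 + l * x i)) * ν l := by
  set P := fun l : ℝ => ∏ i ∈ s, (1 + l * x i)
  obtain ⟨a, hsub, hgain⟩ := exists_Icc_subset_forall_half_mul_abs_le_mul (∑ i ∈ s, x i) hδ
  have hsub' : Set.Icc a (a + δ / 2) ⊆ Set.Icc (-1) 1 :=
    hsub.trans (Set.Icc_subset_Icc (by linarith) (by linarith))
  have hbet : ∀ l ∈ Set.Icc a (a + δ / 2),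
      c₀ * Real.exp (δ / 2 * |∑ i ∈ s, x i| - 2 * δ ^ 2 * #s) ≤ P l * ν l := by
    intro l hl
    have hlδ : |l| ≤ δ := abs_le.2 (hsub hl)
    have hexp : Real.exp (δ / 2 * |∑ i ∈ s, x i| - 2 * δ ^ 2 * #s) ≤ P l := by
      have hl2 : l ^ 2 ≤ δ ^ 2 := sq_le_sq.2 (by rwa [abs_of_pos hδ])
      refine (Real.exp_le_exp.2 ?_).trans (exp_sub_le_prod_one_add_mul s hx (hlδ.trans hδ_le))
      nlinarith [hgain l hl, mul_le_mul_of_nonneg_right hl2 (Nat.cast_nonneg (α := ℝ) #s)]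
    rw [mul_comm]
    exact mul_le_mul hexp (hν_lb l (hsub' hl)) hc₀ ((Real.exp_pos _).le.trans hexp)
  have hnonneg : 0 ≤ᵐ[volume.restrict (Set.Icc (-1) 1)] fun l => P l * ν l :=
    (ae_restrict_iff' measurableSet_Icc).2 <| .of_forall fun l hl =>
      mul_nonneg (prod_one_add_mul_nonneg s hx (abs_le.2 hl)) (hc₀.trans (hν_lb l hl))
  calc c₀ * (δ / 2) * Real.exp (δ / 2 * |∑ i ∈ s, x i| - 2 * δ ^ 2 * #s)
      = volume.real (Set.Icc a (a + δ / 2)) •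
          (c₀ * Real.exp (δ / 2 * |∑ i ∈ s, x i| - 2 * δ ^ 2 * #s)) := by
        rw [Real.volume_real_Icc, max_eq_left (by linarith), smul_eq_mul]
        ring
    _ ≤ ∫ l in Set.Icc a (a + δ / 2), P l * ν l :=
        setIntegral_ge_of_const_le measurableSet_Icc measure_Icc_lt_top.ne hbet
          ((integrableOn_prod_one_add_mul_mul s hν).mono_set hsub')
    _ ≤ ∫ l in Set.Icc (-1 : ℝ) 1, P l * ν l :=
        setIntegral_mono_set (integrableOn_prod_one_add_mul_mul s hν) hnonneg
          hsub'.eventuallyLE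

end Mixture

noncomputable def mixtureWealth (ν : ℝ → ℝ) (x : ℕ → ℝ) (t : ℕ) : ℝ :=
  ∫ l in Set.Icc (-1 : ℝ) 1, (∏ i ∈ Finset.Icc 1 t, (1 + l * x i)) * ν l

section MixtureWealth

variable {ν : ℝ → ℝ} {x : ℕ → ℝ}

theorem mixtureWealth_le_two_pow (hx : ∀ i, |x i| ≤ 1)
    (hν_nonneg : ∀ l ∈ Set.Icc (-1 : ℝ) 1, 0 ≤ ν l)
    (hν_prob : ∫ l in Set.Icc (-1 : ℝ) 1, ν l = 1) (t : ℕ) : mixtureWealth ν x t ≤ 2 ^ t := by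
  have hν : IntegrableOn ν (Set.Icc (-1) 1) := .of_integral_ne_zero (by simp [hν_prob])
  have h := setIntegral_prod_one_add_mul_mul_le (Finset.Icc 1 t) (fun i _ => hx i) hν_nonneg hν
  rwa [hν_prob, mul_one, Nat.card_Icc, Nat.add_sub_cancel] at h

theorem exp_le_mixtureWealth (hx : ∀ i, |x i| ≤ 1) {c₀ : ℝ} (hc₀ : 0 ≤ c₀)
    (hν_lb : ∀ l ∈ Set.Icc (-1 : ℝ) 1, c₀ ≤ ν l) (hν : IntegrableOn ν (Set.Icc (-1) 1))
    {r δ : ℝ} (hδ : 0 < δ) (hδ_half : δ ≤ 1 / 2) (hδ_r : δ ≤ r / 8) {t : ℕ}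
    (ht : r * t ≤ |∑ i ∈ Finset.Icc 1 t, x i|) :
    c₀ * (δ / 2) * Real.exp (δ * r / 4 * t) ≤ mixtureWealth ν x t := by
  refine le_trans ?_ <| exp_le_setIntegral_prod_one_add_mul_mul (Finset.Icc 1 t)
    (fun i _ => hx i) hc₀ hν_lb hν hδ hδ_half
  rw [Nat.card_Icc, Nat.add_sub_cancel]
  gcongr
  have ht0 : (0 : ℝ) ≤ t := Nat.cast_nonneg t
  nlinarith [mul_le_mul_of_nonneg_left ht hδ.le,
    mul_le_mul_of_nonneg_left hδ_r (mul_nonneg hδ.le ht0)]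

end MixtureWealth

theorem le_liminf_inv_mul_log_of_exp_le {K : ℕ → ℝ} {A B c : ℝ} (hA : 0 < A)
    (hlow : ∀ᶠ t : ℕ in atTop, A * Real.exp (c * t) ≤ K t) (hup : ∀ t, K t ≤ B ^ t) :
    c ≤ liminf (fun t : ℕ => 1 / (t : ℝ) * Real.log (K t)) atTop := by
  have hlog : ∀ᶠ t : ℕ in atTop, Real.log A + c * t ≤ Real.log (K t) := by
    filter_upwards [hlow] with t ht
    rw [← Real.log_exp (c * t), ← Real.log_mul hA.ne' (Real.exp_pos _).ne']
    exact Real.log_le_log (by positivity) ht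
  have hlow' : ∀ᶠ t : ℕ in atTop, c + Real.log A / t ≤ 1 / (t : ℝ) * Real.log (K t) := by
    filter_upwards [hlog, eventually_gt_atTop 0] with t ht ht0
    have ht0' : (0 : ℝ) < t := Nat.cast_pos.2 ht0
    rw [div_mul_eq_mul_div, one_mul, le_div_iff₀ ht0']
    nlinarith [div_mul_cancel₀ (Real.log A) ht0'.ne']
  have hup' : ∀ᶠ t : ℕ in atTop, 1 / (t : ℝ) * Real.log (K t) ≤ Real.log B := by
    filter_upwards [hlow, eventually_gt_atTop 0] with t ht ht0
    have ht0' : (0 : ℝ) < t := Nat.cast_pos.2 ht0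
    have hK : Real.log (K t) ≤ t * Real.log B :=
      Real.log_pow B t ▸ Real.log_le_log ((by positivity : 0 < A * _).trans_le ht) (hup t)
    rw [div_mul_eq_mul_div, one_mul, div_le_iff₀ ht0']
    linarith
  have hlim : Tendsto (fun t : ℕ => c + Real.log A / t) atTop (nhds c) := by
    simpa using tendsto_const_nhds.add (tendsto_const_div_atTop_nhds_zero_nat (Real.log A))
  calc c = liminf (fun t : ℕ => c + Real.log A / t) atTop := hlim.liminf_eq.symm
    _ ≤ _ := liminf_le_liminf hlow' hlim.isBoundedUnder_ge
        (isCoboundedUnder_ge_of_eventually_le _ hup')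

theorem stmt_4_general
    (c₀ : ℝ) (hc₀ : 0 < c₀)
    (ν : ℝ → ℝ) (hν_lb : ∀ l ∈ Set.Icc (-1 : ℝ) 1, c₀ ≤ ν l)
    (hν_prob : ∫ l in Set.Icc (-1 : ℝ) 1, ν l = 1)
    (x : ℕ → ℝ) (hx : ∀ t, x t ∈ Set.Icc (-1 : ℝ) 1)
    (S : ℕ → ℝ) (hS : ∀ t, S t = ∑ i ∈ Finset.Icc 1 t, x i)
    (K : ℕ → ℝ)
    (hK : ∀ t, K t =
      ∫ l in Set.Icc (-1 : ℝ) 1, (∏ i ∈ Finset.Icc 1 t, (1 + l * x i)) * ν l)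
    (α : ℝ)
    (hliminf : 0 < Filter.liminf (fun t : ℕ => |S t / (t : ℝ)|) Filter.atTop) :
    0 < Filter.liminf (fun t : ℕ => (1 / (t : ℝ)) * Real.log (K t)) Filter.atTop ∧
    ∃ t : ℕ, 1 ≤ t ∧ K t ≥ 1 / α := by
  obtain rfl : K = mixtureWealth ν x := funext hK
  have hx' : ∀ t, |x t| ≤ 1 := fun t => abs_le.2 (hx t)
  have hν : IntegrableOn ν (Set.Icc (-1) 1) := .of_integral_ne_zero (by simp [hν_prob])
  set r := liminf (fun t : ℕ => |S t / (t : ℝ)|) atTop / 2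
  have hS_lb : ∀ᶠ t : ℕ in atTop, r * t ≤ |∑ i ∈ Finset.Icc 1 t, x i| := by
    filter_upwards [eventually_lt_of_lt_liminf (half_lt_self hliminf)
      (isBoundedUnder_of ⟨0, fun t => abs_nonneg _⟩), eventually_gt_atTop 0] with t ht ht0
    rw [abs_div, Nat.abs_cast, lt_div_iff₀ (Nat.cast_pos.2 ht0), hS] at ht
    exact ht.le
  set δ := min (r / 8) (1 / 2)
  have hδ : 0 < δ := lt_min (by positivity) one_half_pos
  have hlow : ∀ᶠ t : ℕ in atTop,
      c₀ * (δ / 2) * Real.exp (δ * r / 4 * t) ≤ mixtureWealth ν x t :=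
    hS_lb.mono fun t ht => exp_le_mixtureWealth hx' hc₀.le hν_lb hν hδ (min_le_right _ _)
      (min_le_left _ _) ht
  have hup := mixtureWealth_le_two_pow hx' (fun l hl => hc₀.le.trans (hν_lb l hl)) hν_prob
  refine ⟨(by positivity : (0 : ℝ) < δ * r / 4).trans_le
    (le_liminf_inv_mul_log_of_exp_le (by positivity) hlow hup), ?_⟩
  have hK_top : Tendsto (mixtureWealth ν x) atTop atTop :=
    tendsto_atTop_mono' _ hlow <| (Real.tendsto_exp_atTop.comp <|
      tendsto_natCast_atTop_atTop.const_mul_atTop (by positivity)).const_mul_atTop (by positivity)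
  exact ((eventually_ge_atTop 1).and (hK_top.eventually_ge_atTop (1 / α))).exists

/-- a deterministic statement.  If the running averages of the
payoffs are asymptotically bounded away from zero in absolute value, then the
mixture-method wealth grows at a positive exponential rate, and in particular
the sequential test stops in finite time (the wealth eventually exceeds `1/α`). -/
theorem stmt_4
    (c₀ : ℝ) (hc₀ : 0 < c₀)
    (ν : ℝ → ℝ) (hν_lb : ∀ l ∈ Set.Icc (-1 : ℝ) 1, c₀ ≤ ν l)
    (hν_prob : ∫ l in Set.Icc (-1 : ℝ) 1, ν l = 1)
    (x : ℕ → ℝ) (hx : ∀ t, x t ∈ Set.Icc (-1 : ℝ) 1)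
    (S : ℕ → ℝ) (hS : ∀ t, S t = ∑ i ∈ Finset.Icc 1 t, x i)
    (K : ℕ → ℝ)
    (hK : ∀ t, K t =
      ∫ l in Set.Icc (-1 : ℝ) 1, (∏ i ∈ Finset.Icc 1 t, (1 + l * x i)) * ν l)
    (α : ℝ) (hα : α ∈ Set.Ioo (0 : ℝ) 1)
    (hliminf : 0 < Filter.liminf (fun t : ℕ => |S t / (t : ℝ)|) Filter.atTop) :
    0 < Filter.liminf (fun t : ℕ => (1 / (t : ℝ)) * Real.log (K t)) Filter.atTop ∧
    ∃ t : ℕ, 1 ≤ t ∧ K t ≥ 1 / α :=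
  stmt_4_general c₀ hc₀ ν hν_lb hν_prob x hx S hS K hK α hliminf
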